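/- Consider the closed-loop system: x̃ : [0,∞) → ℝⁿ and x̃_c : [0,∞) → ℝ^{nG} are differentiable and satisfy x̃'(t) = (J − R̃(x̃(t)))·Q·x̃(t) + g·ũ(t) and x̃_c'(t) = −k_I·𝓛·ũ_c(t), where ỹ(t) = gᵀQx̃(t), ỹ_c(t) = −𝓛·x̃_c(t), ũ(t) = −r·ỹ(t) − w⁻¹·ỹ_c(t), ũ_c(t) = (w⁻¹)ᵀ·ỹ(t), with w invertible and 𝓛 symmetric. Suppose that for every t ≥ 0 and every v ∈ ℝⁿ one has vᵀ·(R̃(x̃(t)) + g·r·gᵀ)·v ≥ 0 (in particular this holds when the symmetric part of R_D + r is positive semidefinite and x̃(t) stays in the domain 𝔻 where G − G_P(q̃(t)) has nonnegative entries). Then the total storage H_t(t) = ½x̃(t)ᵀQx̃(t) + ½x̃_c(t)ᵀk_I⁻¹x̃_c(t) is nonincreasing on [0,∞); in particular x̃(t)ᵀQx̃(t) + x̃_c(t)ᵀk_I⁻¹x̃_c(t) ≤ x̃(0)ᵀQx̃(0) + x̃_c(0)ᵀk_I⁻¹x̃_c(0) for all t ≥ 0, so every trajectory is bounded. -/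

import Mathlib

/-!
The total storage `H_t` is the plant's Hamiltonian `½ x̃ᵀQx̃` plus the integrator's storage
`½ x̃_cᵀk_I⁻¹x̃_c`. The skew part `J` does no work, the plant is passive with supply rate
`ỹᵀũ − (Qx̃)ᵀR̃(Qx̃)`, the integrator is lossless with supply rate `ũ_cᵀỹ_c`, and the feedback
`ũ = −r ỹ − w⁻¹ ỹ_c`, `ũ_c = w⁻ᵀ ỹ` exchanges power between them losslessly except through `r`.
Hence `Ḣ_t = −(Qx̃)ᵀ(R̃ + g r gᵀ)(Qx̃) ≤ 0`. Boundedness follows because positive definite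
quadratic forms are coercive.
-/

open Matrix

/-- Index type of the microgrid state: generator currents, line currents, bus charges. -/
abbrev BIdx (nG nE nN : ℕ) := Fin nG ⊕ (Fin nE ⊕ Fin nN)

/-- The input matrix `g = [I; 0; 0]`. -/
noncomputable def gMat (nG nE nN : ℕ) : Matrix (BIdx nG nE nN) (Fin nG) ℝ :=
  Matrix.of fun i j =>
    match i with
    | Sum.inl i' => if i' = j then (1 : ℝ) else 0
    | Sum.inr _ => 0

/-- Block-diagonal matrix with three diagonal blocks. -/
noncomputable def bd3 {nG nE nN : ℕ} (A : Matrix (Fin nG) (Fin nG) ℝ)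
    (B : Matrix (Fin nE) (Fin nE) ℝ) (D : Matrix (Fin nN) (Fin nN) ℝ) :
    Matrix (BIdx nG nE nN) (BIdx nG nE nN) ℝ :=
  Matrix.fromBlocks A 0 0 (Matrix.fromBlocks B 0 0 D)

/-- `G_P(q̃) = diag (P_k C_k² / (q̄_k (q̃_k + q̄_k)))`. -/
noncomputable def GPm {nN : ℕ} (P cD qbar : Fin nN → ℝ) (qt : Fin nN → ℝ) :
    Matrix (Fin nN) (Fin nN) ℝ :=
  Matrix.diagonal fun k => P k * (cD k) ^ 2 / (qbar k * (qt k + qbar k))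

/-- The state-dependent dissipation matrix
`R̃(z̃) = blockdiag(R_G + R_D, R_E, G − G_P(q̃))` of the incremental microgrid model. -/
noncomputable def Rtil {nG nE nN : ℕ} (rG rD : Fin nG → ℝ) (rE : Fin nE → ℝ)
    (gD cD P qbar : Fin nN → ℝ) (z : BIdx nG nE nN → ℝ) :
    Matrix (BIdx nG nE nN) (BIdx nG nE nN) ℝ :=
  bd3 (Matrix.diagonal fun i => rG i + rD i) (Matrix.diagonal rE)
    (Matrix.diagonal gD - GPm P cD qbar fun k => z (Sum.inr (Sum.inr k)))

section

variable {ι κ : Type*} [Fintype ι]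

theorem HasDerivAt.dotProduct {u v : ℝ → ι → ℝ} {u' v' : ι → ℝ} {t : ℝ}
    (hu : HasDerivAt u u' t) (hv : HasDerivAt v v' t) :
    HasDerivAt (fun s => u s ⬝ᵥ v s) (u' ⬝ᵥ v t + u t ⬝ᵥ v') t := by
  have h : HasDerivAt (fun s => ∑ i, u s i * v s i) (∑ i, (u' i * v t i + u t i * v' i)) t :=
    HasDerivAt.fun_sum fun i _ => (hasDerivAt_pi.mp hu i).mul (hasDerivAt_pi.mp hv i)
  simpa only [_root_.dotProduct, Finset.sum_add_distrib] using h

theorem HasDerivAt.mulVec (M : Matrix κ ι ℝ) {x : ℝ → ι → ℝ} {x' : ι → ℝ} {t : ℝ}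
    (hx : HasDerivAt x x' t) : HasDerivAt (fun s => M *ᵥ x s) (M *ᵥ x') t :=
  hasDerivAt_pi.mpr fun i =>
    HasDerivAt.fun_sum fun j _ => (hasDerivAt_pi.mp hx j).const_mul (M i j)

theorem HasDerivAt.dotProduct_mulVec_self {M : Matrix ι ι ℝ} (hM : M.IsSymm)
    {x : ℝ → ι → ℝ} {x' : ι → ℝ} {t : ℝ} (hx : HasDerivAt x x' t) :
    HasDerivAt (fun s => x s ⬝ᵥ (M *ᵥ x s)) (2 * (x' ⬝ᵥ (M *ᵥ x t))) t := by
  convert hx.dotProduct (hx.mulVec M) using 1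
  rw [← hM.eq, dotProduct_transpose_mulVec, hM.eq]
  ring

theorem Matrix.PosDef.exists_pos_mul_sq_norm_le {Q : Matrix ι ι ℝ} (hQ : Q.PosDef) :
    ∃ c > 0, ∀ v : ι → ℝ, c * ‖v‖ ^ 2 ≤ v ⬝ᵥ (Q *ᵥ v) := by
  rcases isEmpty_or_nonempty ι with hι | hι
  · exact ⟨1, one_pos, fun v => by simp [Subsingleton.elim v 0]⟩
  have hcont : Continuous fun v : ι → ℝ => v ⬝ᵥ (Q *ᵥ v) := by fun_prop
  obtain ⟨u₀, hu₀, hmin⟩ := (isCompact_sphere (0 : ι → ℝ) 1).exists_isMinOn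
    (NormedSpace.sphere_nonempty.mpr zero_le_one) hcont.continuousOn
  have hu₀ne : u₀ ≠ 0 := ne_zero_of_mem_unit_sphere ⟨u₀, hu₀⟩
  refine ⟨u₀ ⬝ᵥ (Q *ᵥ u₀), by simpa using hQ.dotProduct_mulVec_pos hu₀ne, fun v => ?_⟩
  rcases eq_or_ne v 0 with rfl | hv
  · simp
  have hvn : 0 < ‖v‖ := norm_pos_iff.mpr hv
  set u : ι → ℝ := ‖v‖⁻¹ • v
  have hu : u ∈ Metric.sphere (0 : ι → ℝ) 1 := by
    simp [u, norm_smul, inv_mul_cancel₀ hvn.ne']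
  have hQu : u ⬝ᵥ (Q *ᵥ u) = ‖v‖⁻¹ ^ 2 * (v ⬝ᵥ (Q *ᵥ v)) := by
    simp only [u, Matrix.mulVec_smul, smul_dotProduct, dotProduct_smul, smul_eq_mul]
    ring
  calc u₀ ⬝ᵥ (Q *ᵥ u₀) * ‖v‖ ^ 2 ≤ u ⬝ᵥ (Q *ᵥ u) * ‖v‖ ^ 2 := by gcongr; exact hmin hu
    _ = v ⬝ᵥ (Q *ᵥ v) := by rw [hQu]; field_simp

theorem Matrix.PosDef.exists_norm_le_of_dotProduct_mulVec_le {Q : Matrix ι ι ℝ}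
    (hQ : Q.PosDef) (B : ℝ) : ∃ M, ∀ v : ι → ℝ, v ⬝ᵥ (Q *ᵥ v) ≤ B → ‖v‖ ≤ M := by
  obtain ⟨c, hc, hcQ⟩ := hQ.exists_pos_mul_sq_norm_le
  refine ⟨√(B / c), fun v hv => ?_⟩
  rw [← abs_norm]
  exact Real.abs_le_sqrt <| (le_div_iff₀' hc).mpr <| (hcQ v).trans hv

theorem dotProduct_mulVec_self_eq_zero_of_transpose_eq_neg {J : Matrix ι ι ℝ}
    (hJ : Jᵀ = -J) (v : ι → ℝ) : v ⬝ᵥ (J *ᵥ v) = 0 := by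
  have h := dotProduct_transpose_mulVec J v v
  rw [hJ, Matrix.neg_mulVec, dotProduct_neg] at h
  linarith

theorem dotProduct_mul_mul_transpose_mulVec [Fintype κ] (g : Matrix ι κ ℝ) (r : Matrix κ κ ℝ)
    (v : ι → ℝ) : v ⬝ᵥ ((g * r * gᵀ) *ᵥ v) = (gᵀ *ᵥ v) ⬝ᵥ (r *ᵥ (gᵀ *ᵥ v)) := by
  rw [← Matrix.mulVec_mulVec, ← Matrix.mulVec_mulVec, Matrix.dotProduct_mulVec,
    ← Matrix.mulVec_transpose]

theorem portHamiltonian_power_balance [Fintype κ] {J : Matrix ι ι ℝ} (hJ : Jᵀ = -J)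
    (R : Matrix ι ι ℝ) (g : Matrix ι κ ℝ) (v : ι → ℝ) (u : κ → ℝ) :
    ((J - R) *ᵥ v + g *ᵥ u) ⬝ᵥ v = -(v ⬝ᵥ (R *ᵥ v)) + (gᵀ *ᵥ v) ⬝ᵥ u := by
  rw [add_dotProduct, Matrix.sub_mulVec, sub_dotProduct, dotProduct_comm (J *ᵥ v),
    dotProduct_mulVec_self_eq_zero_of_transpose_eq_neg hJ, dotProduct_comm (R *ᵥ v),
    dotProduct_comm (g *ᵥ u), ← dotProduct_transpose_mulVec g u v, dotProduct_comm u]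
  ring

theorem integrator_power_balance [Fintype κ] [DecidableEq κ] {K L : Matrix κ κ ℝ}
    (hK : K.IsSymm) (hKdet : IsUnit K.det) (hL : L.IsSymm) (uc c : κ → ℝ) :
    (-((K * L) *ᵥ uc)) ⬝ᵥ (K⁻¹ *ᵥ c) = uc ⬝ᵥ (-(L *ᵥ c)) := by
  rw [neg_dotProduct, dotProduct_neg, ← Matrix.mulVec_mulVec, dotProduct_comm,
    ← dotProduct_transpose_mulVec, hK.eq, Matrix.mulVec_mulVec, Matrix.mul_nonsing_inv K hKdet,
    Matrix.one_mulVec, dotProduct_comm, ← dotProduct_transpose_mulVec, hL.eq, dotProduct_comm]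

theorem feedback_interconnection_power [Fintype κ] (r W : Matrix κ κ ℝ) (y yc : κ → ℝ) :
    y ⬝ᵥ (-(r *ᵥ y) - W *ᵥ yc) + (Wᵀ *ᵥ y) ⬝ᵥ yc = -(y ⬝ᵥ (r *ᵥ y)) := by
  rw [dotProduct_sub, dotProduct_neg, Matrix.mulVec_transpose, ← Matrix.dotProduct_mulVec]
  ring

end

theorem antitoneOn_Ici_of_hasDerivAt_nonpos {f f' : ℝ → ℝ} {a : ℝ}
    (hf : ∀ t, a ≤ t → HasDerivAt f (f' t) t) (hf' : ∀ t, a ≤ t → f' t ≤ 0) :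
    AntitoneOn f (Set.Ici a) := by
  refine antitoneOn_of_hasDerivWithinAt_nonpos (f' := f') (convex_Ici a)
    (fun t ht => (hf t ht).continuousAt.continuousWithinAt) (fun t ht => ?_) (fun t ht => ?_)
  all_goals rw [interior_Ici] at ht
  exacts [(hf t (le_of_lt ht)).hasDerivWithinAt, hf' t (le_of_lt ht)]

theorem closedLoop_storage_hasDerivAt {ι κ : Type*} [Fintype ι] [Fintype κ] [DecidableEq κ]
    {Q J : Matrix ι ι ℝ} (hQ : Q.IsSymm) (hJ : Jᵀ = -J) (R : Matrix ι ι ℝ) (g : Matrix ι κ ℝ)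
    {K L : Matrix κ κ ℝ} (hK : K.IsSymm) (hKdet : IsUnit K.det) (hL : L.IsSymm)
    (r W : Matrix κ κ ℝ) {x : ℝ → ι → ℝ} {c : ℝ → κ → ℝ} {t : ℝ}
    (hx : HasDerivAt x ((J - R) *ᵥ (Q *ᵥ x t) +
      g *ᵥ (-(r *ᵥ (gᵀ *ᵥ (Q *ᵥ x t))) - W *ᵥ (-(L *ᵥ c t)))) t)
    (hc : HasDerivAt c (-((K * L) *ᵥ (Wᵀ *ᵥ (gᵀ *ᵥ (Q *ᵥ x t))))) t) :
    HasDerivAt (fun s => (1 / 2 : ℝ) * (x s ⬝ᵥ (Q *ᵥ x s)) + (1 / 2 : ℝ) * (c s ⬝ᵥ (K⁻¹ *ᵥ c s)))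
      (-((Q *ᵥ x t) ⬝ᵥ ((R + g * r * gᵀ) *ᵥ (Q *ᵥ x t)))) t := by
  refine (((hx.dotProduct_mulVec_self hQ).const_mul (1 / 2 : ℝ)).add
    ((hc.dotProduct_mulVec_self hK.inv).const_mul (1 / 2 : ℝ))).congr_deriv ?_
  rw [portHamiltonian_power_balance hJ, integrator_power_balance hK hKdet hL,
    Matrix.add_mulVec, dotProduct_add, dotProduct_mul_mul_transpose_mulVec]
  linarith [feedback_interconnection_power r W (gᵀ *ᵥ (Q *ᵥ x t)) (-(L *ᵥ c t))]

theorem closed_loop_storage_nonincreasing_general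
    (nG nE nN : ℕ)
    (rG rD : Fin nG → ℝ) (rE : Fin nE → ℝ) (gD cD : Fin nN → ℝ)
    (Q : Matrix (BIdx nG nE nN) (BIdx nG nE nN) ℝ) (hQpd : Q.PosDef)
    (J : Matrix (BIdx nG nE nN) (BIdx nG nE nN) ℝ) (hJ : Jᵀ = -J)
    (P qbar : Fin nN → ℝ)
    (kd : Fin nG → ℝ) (hkd : ∀ i, 0 < kd i)
    (L : Matrix (Fin nG) (Fin nG) ℝ) (hL : L.IsSymm)
    (r w : Matrix (Fin nG) (Fin nG) ℝ)
    (xt : ℝ → (BIdx nG nE nN → ℝ)) (xc : ℝ → (Fin nG → ℝ))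
    (hxdiff : ∀ t : ℝ, 0 ≤ t → HasDerivAt xt
      ((J - Rtil rG rD rE gD cD P qbar (xt t)) *ᵥ (Q *ᵥ xt t) +
        gMat nG nE nN *ᵥ
          (-(r *ᵥ ((gMat nG nE nN)ᵀ *ᵥ (Q *ᵥ xt t))) - w⁻¹ *ᵥ (-(L *ᵥ xc t)))) t)
    (hxcdiff : ∀ t : ℝ, 0 ≤ t → HasDerivAt xc
      (-((Matrix.diagonal kd * L) *ᵥ ((w⁻¹)ᵀ *ᵥ ((gMat nG nE nN)ᵀ *ᵥ (Q *ᵥ xt t))))) t)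
    (hpsd : ∀ t : ℝ, 0 ≤ t → ∀ v : BIdx nG nE nN → ℝ,
      0 ≤ v ⬝ᵥ ((Rtil rG rD rE gD cD P qbar (xt t) + gMat nG nE nN * r * (gMat nG nE nN)ᵀ)
        *ᵥ v)) :
    AntitoneOn (fun t => (1 / 2 : ℝ) * ((xt t) ⬝ᵥ (Q *ᵥ xt t)) +
        (1 / 2 : ℝ) * ((xc t) ⬝ᵥ ((Matrix.diagonal kd)⁻¹ *ᵥ xc t))) (Set.Ici 0) ∧
    (∀ t : ℝ, 0 ≤ t →
      (xt t) ⬝ᵥ (Q *ᵥ xt t) + (xc t) ⬝ᵥ ((Matrix.diagonal kd)⁻¹ *ᵥ xc t) ≤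
      (xt 0) ⬝ᵥ (Q *ᵥ xt 0) + (xc 0) ⬝ᵥ ((Matrix.diagonal kd)⁻¹ *ᵥ xc 0)) ∧
    (∃ M : ℝ, ∀ t : ℝ, 0 ≤ t → ‖xt t‖ ≤ M ∧ ‖xc t‖ ≤ M) := by
  have hK : (Matrix.diagonal kd).PosDef := Matrix.PosDef.diagonal hkd
  have hKinv : (Matrix.diagonal kd)⁻¹.PosDef := hK.inv
  have hH := antitoneOn_Ici_of_hasDerivAt_nonpos
    (fun t ht => closedLoop_storage_hasDerivAt (isHermitian_iff_isSymm.mp hQpd.isHermitian) hJ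
      _ _ (Matrix.isSymm_diagonal kd) ((Matrix.isUnit_iff_isUnit_det _).mp hK.isUnit) hL r w⁻¹
      (hxdiff t ht) (hxcdiff t ht))
    (fun t ht => neg_nonpos.mpr (hpsd t ht _))
  have hle : ∀ t : ℝ, 0 ≤ t →
      (xt t) ⬝ᵥ (Q *ᵥ xt t) + (xc t) ⬝ᵥ ((Matrix.diagonal kd)⁻¹ *ᵥ xc t) ≤
      (xt 0) ⬝ᵥ (Q *ᵥ xt 0) + (xc 0) ⬝ᵥ ((Matrix.diagonal kd)⁻¹ *ᵥ xc 0) := fun t ht => by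
    linarith [hH Set.self_mem_Ici ht ht]
  set B := (xt 0) ⬝ᵥ (Q *ᵥ xt 0) + (xc 0) ⬝ᵥ ((Matrix.diagonal kd)⁻¹ *ᵥ xc 0)
  obtain ⟨M₁, hM₁⟩ := hQpd.exists_norm_le_of_dotProduct_mulVec_le B
  obtain ⟨M₂, hM₂⟩ := hKinv.exists_norm_le_of_dotProduct_mulVec_le B
  refine ⟨hH, hle, max M₁ M₂, fun t ht => ⟨?_, ?_⟩⟩
  · have hxc := hKinv.posSemidef.dotProduct_mulVec_nonneg (xc t)
    rw [star_trivial] at hxc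
    exact (hM₁ _ (by linarith [hle t ht])).trans (le_max_left _ _)
  · have hxt := hQpd.posSemidef.dotProduct_mulVec_nonneg (xt t)
    rw [star_trivial] at hxt
    exact (hM₂ _ (by linarith [hle t ht])).trans (le_max_right _ _)

/-- **Lyapunov part of Proposition 2.** If along the closed loop the
dissipation quadratic form `vᵀ(R̃(x̃(t)) + g r gᵀ)v` is nonnegative for all `t ≥ 0`,
then the total storage `H_t = ½x̃ᵀQx̃ + ½x̃_cᵀk_I⁻¹x̃_c` is nonincreasing on `[0,∞)`;
in particular `x̃(t)ᵀQx̃(t) + x̃_c(t)ᵀk_I⁻¹x̃_c(t) ≤ x̃(0)ᵀQx̃(0) + x̃_c(0)ᵀk_I⁻¹x̃_c(0)`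
for all `t ≥ 0`, and every trajectory is bounded. -/
theorem closed_loop_storage_nonincreasing
    (nG nE nN : ℕ) (hnG : 0 < nG) (hnE : 0 < nE) (hnN : 0 < nN)
    (rG rD : Fin nG → ℝ) (rE : Fin nE → ℝ) (gD cD : Fin nN → ℝ)
    (hrG : ∀ i, 0 < rG i) (hrD : ∀ i, 0 < rD i) (hrE : ∀ j, 0 < rE j)
    (hcD : ∀ k, 0 < cD k) (hgD : ∀ k, 0 ≤ gD k)
    (Q : Matrix (BIdx nG nE nN) (BIdx nG nE nN) ℝ) (hQsymm : Q.IsSymm) (hQpd : Q.PosDef)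
    (J : Matrix (BIdx nG nE nN) (BIdx nG nE nN) ℝ) (hJ : Jᵀ = -J)
    (P qbar : Fin nN → ℝ) (hqbar : ∀ k, qbar k ≠ 0)
    (kd : Fin nG → ℝ) (hkd : ∀ i, 0 < kd i)
    (L : Matrix (Fin nG) (Fin nG) ℝ) (hL : L.IsSymm)
    (r w : Matrix (Fin nG) (Fin nG) ℝ) (hw : IsUnit w.det)
    (xt : ℝ → (BIdx nG nE nN → ℝ)) (xc : ℝ → (Fin nG → ℝ))
    (hxdiff : ∀ t : ℝ, 0 ≤ t → HasDerivAt xt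
      ((J - Rtil rG rD rE gD cD P qbar (xt t)) *ᵥ (Q *ᵥ xt t) +
        gMat nG nE nN *ᵥ
          (-(r *ᵥ ((gMat nG nE nN)ᵀ *ᵥ (Q *ᵥ xt t))) - w⁻¹ *ᵥ (-(L *ᵥ xc t)))) t)
    (hxcdiff : ∀ t : ℝ, 0 ≤ t → HasDerivAt xc
      (-((Matrix.diagonal kd * L) *ᵥ ((w⁻¹)ᵀ *ᵥ ((gMat nG nE nN)ᵀ *ᵥ (Q *ᵥ xt t))))) t)
    (hpsd : ∀ t : ℝ, 0 ≤ t → ∀ v : BIdx nG nE nN → ℝ,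
      0 ≤ v ⬝ᵥ ((Rtil rG rD rE gD cD P qbar (xt t) + gMat nG nE nN * r * (gMat nG nE nN)ᵀ)
        *ᵥ v)) :
    AntitoneOn (fun t => (1 / 2 : ℝ) * ((xt t) ⬝ᵥ (Q *ᵥ xt t)) +
        (1 / 2 : ℝ) * ((xc t) ⬝ᵥ ((Matrix.diagonal kd)⁻¹ *ᵥ xc t))) (Set.Ici 0) ∧
    (∀ t : ℝ, 0 ≤ t →
      (xt t) ⬝ᵥ (Q *ᵥ xt t) + (xc t) ⬝ᵥ ((Matrix.diagonal kd)⁻¹ *ᵥ xc t) ≤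
      (xt 0) ⬝ᵥ (Q *ᵥ xt 0) + (xc 0) ⬝ᵥ ((Matrix.diagonal kd)⁻¹ *ᵥ xc 0)) ∧
    (∃ M : ℝ, ∀ t : ℝ, 0 ≤ t → ‖xt t‖ ≤ M ∧ ‖xc t‖ ≤ M) :=
  closed_loop_storage_nonincreasing_general nG nE nN rG rD rE gD cD Q hQpd J hJ P qbar kd hkd L hL r
    w xt xc hxdiff hxcdiff hpsd
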